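/- arXiv:1110.3040 — 3 statements merged into one kernel-verified Lean document; each statement's English description precedes it below -/
import Mathlib

section
/- Every indecomposable representation of the linearly oriented quiver A_n is isomorphic to an interval representation E^{ij} for some 1 ≤ i ≤ j ≤ n. -/
open Classical

/-- A representation of a quiver (given by vertex type `ι`, arrow type `E`,
and source/target maps `s t : E → ι`) over a field `K`: a finite-dimensional
`K`-vector space at each vertex and a linear map along each arrow. -/
structure QRep (K : Type) [Field K] {ι : Type} {E : Type} (s t : E → ι) : Type 1 where
  V : ι → Type
  [addV : ∀ i, AddCommGroup (V i)]
  [modV : ∀ i, Module K (V i)]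
  [fdV : ∀ i, FiniteDimensional K (V i)]
  f : ∀ e : E, V (s e) →ₗ[K] V (t e)

attribute [instance] QRep.addV QRep.modV QRep.fdV

namespace QRep

variable {K : Type} [Field K] {ι E : Type} {s t : E → ι}

/-- A morphism of representations: linear maps at each vertex commuting with the arrow maps. -/
structure Hom (X Y : QRep K s t) : Type where
  φ : ∀ i, X.V i →ₗ[K] Y.V i
  comm : ∀ e, (Y.f e).comp (φ (s e)) = (φ (t e)).comp (X.f e)

def Hom.Surjective {X Y : QRep K s t} (f : Hom X Y) : Prop := ∀ i, Function.Surjective (f.φ i)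

def Hom.Injective {X Y : QRep K s t} (f : Hom X Y) : Prop := ∀ i, Function.Injective (f.φ i)

/-- Two representations are isomorphic if there is a morphism bijective at every vertex. -/
def Iso (X Y : QRep K s t) : Prop := ∃ f : Hom X Y, ∀ i, Function.Bijective (f.φ i)

/-- Direct sum of two representations, taken vertexwise. -/
def dsum (X Y : QRep K s t) : QRep K s t where
  V i := X.V i × Y.V i
  f e := (X.f e).prodMap (Y.f e)

instance : Module.Finite K PUnit :=
  Module.Finite.of_surjective (0 : K →ₗ[K] PUnit) (fun x => ⟨0, Subsingleton.elim _ _⟩)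

/-- The zero representation. -/
def zero : QRep K s t where
  V _ := PUnit
  f _ := 0

/-- A representation is zero if all its vector spaces are zero. -/
def IsZero (X : QRep K s t) : Prop := ∀ i, ∀ x : X.V i, x = 0

/-- Indecomposable: nonzero, and not isomorphic to a direct sum of two nonzero representations. -/
def Indec (X : QRep K s t) : Prop :=
  ¬ X.IsZero ∧ ∀ A B : QRep K s t, Iso X (A.dsum B) → A.IsZero ∨ B.IsZero

/-- Direct sum of a finite list of representations. -/
noncomputable def dsumList : List (QRep K s t) → QRep K s t
  | [] => zero
  | X :: L => X.dsum (dsumList L)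

/-- An extension `Y` of `Z` by `X`: an injective morphism `X → Y` and a surjective
morphism `Y → Z` whose vertexwise kernel is the image of `X`. -/
structure Extension (X Y Z : QRep K s t) : Type where
  incl : Hom X Y
  proj : Hom Y Z
  inj : ∀ i, Function.Injective (incl.φ i)
  surj : ∀ i, Function.Surjective (proj.φ i)
  exact : ∀ i, LinearMap.ker (proj.φ i) = LinearMap.range (incl.φ i)

/-- An extension is trivial (split) if there is a morphism `Y → X` restricting to the identity on `X`. -/
def Extension.Trivial {X Y Z : QRep K s t} (E : Extension X Y Z) : Prop :=
  ∃ r : Hom Y X, ∀ i x, r.φ i (E.incl.φ i x) = x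

/-- A subrepresentation of `Y`: a subspace at each vertex, stable under the arrow maps. -/
structure Sub (Y : QRep K s t) : Type where
  p : ∀ i, Submodule K (Y.V i)
  stable : ∀ e, ∀ x ∈ p (s e), Y.f e x ∈ p (t e)

def Sub.toRep {Y : QRep K s t} (S : Sub Y) : QRep K s t where
  V i := S.p i
  f e := (Y.f e).restrict (S.stable e)

/-- The quotient representation `Y/X`. -/
def Sub.quot {Y : QRep K s t} (S : Sub Y) : QRep K s t where
  V i := Y.V i ⧸ S.p i
  f e := Submodule.mapQ (S.p (s e)) (S.p (t e)) (Y.f e) (fun x hx => S.stable e x hx)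

/-- The inclusion morphism of a subrepresentation. -/
def Sub.incl {Y : QRep K s t} (S : Sub Y) : Hom S.toRep Y where
  φ i := (S.p i).subtype
  comm e := by ext x; rfl

/-- The quotient morphism onto the quotient representation. -/
def Sub.mkQ {Y : QRep K s t} (S : Sub Y) : Hom Y S.quot where
  φ i := (S.p i).mkQ
  comm e := by ext x; first | rfl | exact Submodule.mapQ_apply _ _ _ _

/-- The space of morphisms between two representations, as a subspace of the product of Hom spaces. -/
def HomSpace (X Y : QRep K s t) : Submodule K (∀ i, X.V i →ₗ[K] Y.V i) where
  carrier := {φ | ∀ e, (Y.f e).comp (φ (s e)) = (φ (t e)).comp (X.f e)}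
  add_mem' := by
    intro a b ha hb e
    simp only [Set.mem_setOf_eq] at ha hb
    simp [LinearMap.comp_add, LinearMap.add_comp, ha e, hb e]
  zero_mem' := by intro e; simp
  smul_mem' := by
    intro c a ha e
    simp only [Set.mem_setOf_eq] at ha
    simp [LinearMap.comp_smul, LinearMap.smul_comp, ha e]

end QRep
/-- The source of the `e`-th arrow of the linearly oriented quiver `Aₙ`
(vertices `0,…,n-1`, arrows `e → e+1` for `0 ≤ e < n-1`; 0-based indexing). -/
def ASrc (n : ℕ) (e : Fin (n - 1)) : Fin n := ⟨e.val, by have := e.isLt; omega⟩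

/-- The target of the `e`-th arrow of `Aₙ`. -/
def ATgt (n : ℕ) (e : Fin (n - 1)) : Fin n := ⟨e.val + 1, by have := e.isLt; omega⟩

/-- Representations of the linearly oriented quiver `Aₙ`. -/
abbrev ARep (K : Type) [Field K] (n : ℕ) := QRep K (ASrc n) (ATgt n)

/-- The canonical map from `M` to a submodule `T`: the identity if `T = ⊤`, zero otherwise. -/
noncomputable def toSub {K M : Type} [Field K] [AddCommGroup M] [Module K M]
    (T : Submodule K M) : M →ₗ[K] T :=
  if h : T = ⊤ then LinearMap.codRestrict T LinearMap.id (fun x => by simp [h]) else 0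

/-- The vertex spaces of the interval representation `E^{ij}`: `K` for `i ≤ p ≤ j`, zero otherwise. -/
def ESub (K : Type) [Field K] (n i j : ℕ) (p : Fin n) : Submodule K K :=
  if i ≤ p.val ∧ p.val ≤ j then ⊤ else ⊥

/-- The interval representation `E^{ij}` of `Aₙ` (0-based): one-dimensional spaces at
vertices `i,…,j`, identity maps between consecutive ones, zero elsewhere. -/
noncomputable def Eij (K : Type) [Field K] (n i j : ℕ) : ARep K n where
  V p := ESub K n i j p
  f e := (toSub (ESub K n i j (ATgt n e))).comp (ESub K n i j (ASrc n e)).subtype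

/-- Direct sum of interval representations indexed by a list of pairs. -/
noncomputable def intervalSum (K : Type) [Field K] (n : ℕ) (L : List (ℕ × ℕ)) : ARep K n :=
  QRep.dsumList (L.map fun pr => Eij K n pr.1 pr.2)


/-!
Choose vertices `i ≤ j` such that the composite of the arrows `X_i → X_j` is nonzero and `j - i`
is as large as possible, and `v ∈ X_i` with nonzero image at `j`. The images `w_p` of `v` along
the arrows span a copy of `E^{ij}` in `X`, and a functional `λ` on `X_j` with `λ(w_j) = 1`, pulled
back along the arrows `X_p → X_j`, defines a morphism `X → E^{ij}`. Maximality of `j - i` makes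
both families vanish outside `[i, j]`, so these are morphisms and the second is a retraction of
the first. An indecomposable representation with a retraction onto a nonzero one is isomorphic
to it.
-/

namespace QRep

variable {K : Type} [Field K] {ι E : Type} {s t : E → ι}

def Hom.ker {X Y : QRep K s t} (π : Hom X Y) : Sub X where
  p i := LinearMap.ker (π.φ i)
  stable e x hx := by
    rw [LinearMap.mem_ker] at hx ⊢
    rw [← LinearMap.comp_apply, ← π.comm, LinearMap.comp_apply, hx, map_zero]

theorem iso_dsum_ker_of_retraction {X A : QRep K s t} (ι : Hom A X) (π : Hom X A)
    (hπι : ∀ i x, π.φ i (ι.φ i x) = x) : Iso X (A.dsum π.ker.toRep) := by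
  have hker : ∀ i x, x - ι.φ i (π.φ i x) ∈ π.ker.p i := fun i x => by
    simp [Hom.ker, hπι]
  refine ⟨⟨fun i => (π.φ i).prod (LinearMap.codRestrict _ (LinearMap.id - ι.φ i ∘ₗ π.φ i)
    (hker i)), fun e => ?_⟩, fun i => ⟨fun x y hxy => ?_, fun ⟨a, k, hk⟩ => ?_⟩⟩
  · refine LinearMap.ext fun x => Prod.ext ?_ (Subtype.ext ?_)
    · exact LinearMap.congr_fun (π.comm e) x
    · show X.f e (x - ι.φ (s e) (π.φ (s e) x)) = X.f e x - ι.φ (t e) (π.φ (t e) (X.f e x))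
      rw [map_sub, ← LinearMap.comp_apply (X.f e), ι.comm, LinearMap.comp_apply,
        ← LinearMap.comp_apply (A.f e), π.comm, LinearMap.comp_apply]
  · have h1 : π.φ i x = π.φ i y := congrArg Prod.fst hxy
    have h2 : x - ι.φ i (π.φ i x) = y - ι.φ i (π.φ i y) := congrArg (Subtype.val ∘ Prod.snd) hxy
    rw [h1] at h2
    exact sub_left_inj.mp h2
  · refine ⟨ι.φ i a + k, Prod.ext ?_ (Subtype.ext ?_)⟩
    · show π.φ i (ι.φ i a + k) = a
      rw [map_add, hπι, show π.φ i k = 0 from hk, add_zero]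
    · show ι.φ i a + k - ι.φ i (π.φ i (ι.φ i a + k)) = k
      rw [map_add, hπι, show π.φ i k = 0 from hk, add_zero, add_sub_cancel_left]

theorem Indec.iso_of_retraction {X A : QRep K s t} (hX : X.Indec) (hA : ¬A.IsZero)
    (ι : Hom A X) (π : Hom X A) (hπι : ∀ i x, π.φ i (ι.φ i x) = x) : Iso X A := by
  have hker : π.ker.toRep.IsZero :=
    (hX.2 _ _ (iso_dsum_ker_of_retraction ι π hπι)).resolve_left hA
  refine ⟨π, fun i => ⟨fun x y hxy => ?_, fun a => ⟨ι.φ i a, hπι i a⟩⟩⟩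
  have hxy' : x - y ∈ π.ker.p i := by simp [Hom.ker, hxy]
  exact sub_eq_zero.mp (congrArg Subtype.val (hker i ⟨x - y, hxy'⟩))

end QRep

namespace ARep

variable {K : Type} [Field K] {n : ℕ} (X : ARep K n)

/-- The sum of all arrow maps, as a nilpotent endomorphism of `⨁ₚ X.V p` raising the degree by
one; its powers encode the composites of consecutive arrows without transporting along
equalities of vertices. -/
noncomputable def shift : Module.End K (∀ p, X.V p) :=
  ∑ e : Fin (n - 1), LinearMap.single K X.V (ATgt n e) ∘ₗ X.f e ∘ₗ LinearMap.proj (ASrc n e)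

/-- The composite of the arrows from vertex `p` to vertex `q`; it is zero when `q < p`. -/
noncomputable def path (p q : Fin n) : X.V p →ₗ[K] X.V q :=
  LinearMap.proj q ∘ₗ (X.shift ^ (q.val - p.val)) ∘ₗ LinearMap.single K X.V p

variable {X}

theorem shift_single (e : Fin (n - 1)) (x : X.V (ASrc n e)) :
    X.shift (Pi.single (ASrc n e) x) = Pi.single (ATgt n e) (X.f e x) := by
  rw [shift, LinearMap.sum_apply, Finset.sum_eq_single e]
  · simp
  · intro e' _ he'
    have hne : ASrc n e' ≠ ASrc n e := fun h => he' (Fin.ext (by simpa [ASrc] using h))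
    simp [Pi.single_eq_of_ne hne]
  · simp

theorem shift_single_of_last (p : Fin n) (hp : n ≤ p.val + 1) (x : X.V p) :
    X.shift (Pi.single p x) = 0 := by
  rw [shift, LinearMap.sum_apply]
  refine Finset.sum_eq_zero fun e _ => ?_
  have hne : ASrc n e ≠ p := fun h => by
    have := e.isLt
    have : e.val = p.val := congrArg Fin.val h
    omega
  simp [Pi.single_eq_of_ne hne]

theorem shift_pow_single_apply_of_ne (d : ℕ) (p r : Fin n) (x : X.V p)
    (hr : r.val ≠ p.val + d) : (X.shift ^ d) (Pi.single p x) r = 0 := by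
  induction d generalizing p with
  | zero => exact Pi.single_eq_of_ne (fun h => hr (by simp [h])) x
  | succ d ih =>
    rw [pow_succ, Module.End.mul_apply]
    by_cases hp : p.val + 1 < n
    · have h : X.shift (Pi.single p x) = Pi.single ⟨p.val + 1, hp⟩ (X.f ⟨p.val, by omega⟩ x) :=
        shift_single ⟨p.val, by omega⟩ x
      rw [h]
      exact ih _ _ (by simp; omega)
    · rw [shift_single_of_last p (by omega), map_zero, Pi.zero_apply]

theorem shift_pow_single (p q : Fin n) (hpq : p ≤ q) (x : X.V p) :
    (X.shift ^ (q.val - p.val)) (Pi.single p x) = Pi.single q (X.path p q x) := by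
  ext r
  by_cases hr : r = q
  · subst hr
    simp [path]
  · rw [Pi.single_eq_of_ne hr, shift_pow_single_apply_of_ne]
    intro h
    exact hr (Fin.ext (by rw [Fin.le_def] at hpq; omega))

theorem path_self (p : Fin n) : X.path p p = LinearMap.id := by
  ext x
  simp [path]

theorem path_of_lt {p q : Fin n} (h : q < p) : X.path p q = 0 := by
  ext x
  simp [path, Nat.sub_eq_zero_of_le (Fin.le_def.mp h.le), Pi.single_eq_of_ne h.ne]

theorem path_arrow (e : Fin (n - 1)) : X.path (ASrc n e) (ATgt n e) = X.f e := by
  ext x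
  have h : (ATgt n e).val - (ASrc n e).val = 1 := by simp [ASrc, ATgt]
  simp [path, h, shift_single]

theorem path_comp_path {p q r : Fin n} (hpq : p ≤ q) (hqr : q ≤ r) :
    X.path q r ∘ₗ X.path p q = X.path p r := by
  ext x
  have h : r.val - p.val = (r.val - q.val) + (q.val - p.val) := by
    rw [Fin.le_def] at hpq hqr; omega
  calc X.path q r (X.path p q x)
      = (X.shift ^ (r.val - q.val)) (Pi.single q (X.path p q x)) r := rfl
    _ = (X.shift ^ (r.val - q.val) * X.shift ^ (q.val - p.val)) (Pi.single p x) r := by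
      rw [Module.End.mul_apply, shift_pow_single p q hpq]
    _ = X.path p r x := by rw [← pow_add, ← h]; rfl

end ARep

section Interval

variable {K : Type} [Field K] {n i j : ℕ}

theorem ESub_eq_top {p : Fin n} (h : i ≤ p.val ∧ p.val ≤ j) : ESub K n i j p = ⊤ := if_pos h

theorem ESub_eq_bot {p : Fin n} (h : ¬(i ≤ p.val ∧ p.val ≤ j)) : ESub K n i j p = ⊥ :=
  if_neg h

theorem Eij_not_isZero (hij : i ≤ j) (hj : j < n) : ¬(Eij K n i j).IsZero := fun h =>
  one_ne_zero <| congrArg Subtype.val <|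
    h ⟨i, by omega⟩ ⟨1, by rw [ESub_eq_top (show i ≤ i ∧ i ≤ j from ⟨le_rfl, hij⟩)]; trivial⟩

variable (X : ARep K n)

noncomputable def Eij.homOfVectors (w : ∀ p, X.V p)
    (hw : ∀ p : Fin n, ¬(i ≤ p.val ∧ p.val ≤ j) → w p = 0)
    (hstep : ∀ e, i ≤ (ASrc n e).val → (ASrc n e).val ≤ j → X.f e (w (ASrc n e)) = w (ATgt n e)) :
    QRep.Hom (Eij K n i j) X where
  φ p := LinearMap.toSpanSingleton K (X.V p) (w p) ∘ₗ (ESub K n i j p).subtype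
  comm e := by
    refine LinearMap.ext fun ⟨c, hc⟩ => ?_
    show X.f e (c • w (ASrc n e)) = (toSub (ESub K n i j (ATgt n e)) c : K) • w (ATgt n e)
    by_cases hs : i ≤ (ASrc n e).val ∧ (ASrc n e).val ≤ j
    · rw [map_smul, hstep e hs.1 hs.2]
      by_cases ht : i ≤ (ATgt n e).val ∧ (ATgt n e).val ≤ j
      · rw [toSub, dif_pos (ESub_eq_top ht)]
        rfl
      · rw [hw _ ht, smul_zero, smul_zero]
    · rw [ESub_eq_bot hs, Submodule.mem_bot] at hc
      subst hc
      simp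

noncomputable def Eij.homOfFunctionals (μ : ∀ p, X.V p →ₗ[K] K)
    (hμ : ∀ p : Fin n, ¬(i ≤ p.val ∧ p.val ≤ j) → μ p = 0)
    (hstep : ∀ e, i ≤ (ATgt n e).val → (ATgt n e).val ≤ j →
      μ (ATgt n e) ∘ₗ X.f e = μ (ASrc n e)) :
    QRep.Hom X (Eij K n i j) where
  φ p := LinearMap.codRestrict _ (μ p) fun x => by
    by_cases hp : i ≤ p.val ∧ p.val ≤ j
    · rw [ESub_eq_top hp]; trivial
    · rw [hμ p hp]; exact Submodule.zero_mem _
  comm e := by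
    refine LinearMap.ext fun x => Subtype.ext ?_
    show (toSub (ESub K n i j (ATgt n e)) (μ (ASrc n e) x) : K) = μ (ATgt n e) (X.f e x)
    by_cases ht : i ≤ (ATgt n e).val ∧ (ATgt n e).val ≤ j
    · rw [toSub, dif_pos (ESub_eq_top ht), ← hstep e ht.1 ht.2]
      rfl
    · rw [hμ _ ht, toSub, dif_neg (by rw [ESub_eq_bot ht]; exact bot_ne_top)]
      rfl

theorem Eij.homOfFunctionals_homOfVectors (w : ∀ p, X.V p)
    (hw : ∀ p : Fin n, ¬(i ≤ p.val ∧ p.val ≤ j) → w p = 0)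
    (hwstep : ∀ e, i ≤ (ASrc n e).val → (ASrc n e).val ≤ j →
      X.f e (w (ASrc n e)) = w (ATgt n e))
    (μ : ∀ p, X.V p →ₗ[K] K) (hμ : ∀ p : Fin n, ¬(i ≤ p.val ∧ p.val ≤ j) → μ p = 0)
    (hμstep : ∀ e, i ≤ (ATgt n e).val → (ATgt n e).val ≤ j →
      μ (ATgt n e) ∘ₗ X.f e = μ (ASrc n e))
    (hμw : ∀ p : Fin n, i ≤ p.val → p.val ≤ j → μ p (w p) = 1) (p : Fin n)
    (c : (Eij K n i j).V p) :
    (Eij.homOfFunctionals X μ hμ hμstep).φ p ((Eij.homOfVectors X w hw hwstep).φ p c) = c := by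
  obtain ⟨c, hc⟩ := c
  refine Subtype.ext ?_
  show μ p (c • w p) = c
  by_cases hp : i ≤ p.val ∧ p.val ≤ j
  · rw [map_smul, hμw p hp.1 hp.2, smul_eq_mul, mul_one]
  · rw [ESub_eq_bot hp, Submodule.mem_bot] at hc
    rw [hc, zero_smul, map_zero]

end Interval

namespace ARep

variable {K : Type} [Field K] {n : ℕ} {X : ARep K n}

theorem exists_longest_path (hX : ¬X.IsZero) :
    ∃ (i j : Fin n) (v : X.V i), i ≤ j ∧ X.path i j v ≠ 0 ∧
      ∀ p q : Fin n, j.val - i.val < q.val - p.val → X.path p q = 0 := by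
  obtain ⟨p, x, hx⟩ : ∃ p, ∃ x : X.V p, x ≠ 0 := by simpa [QRep.IsZero] using hX
  let S := Finset.univ.filter fun pq : Fin n × Fin n => X.path pq.1 pq.2 ≠ 0
  have hS : (p, p) ∈ S := by
    simp only [S, Finset.mem_filter, Finset.mem_univ, true_and, path_self]
    exact fun h => hx (LinearMap.congr_fun h x)
  obtain ⟨⟨i, j⟩, hij, hmax⟩ := S.exists_max_image (fun pq => pq.2.val - pq.1.val) ⟨_, hS⟩
  simp only [S, Finset.mem_filter, Finset.mem_univ, true_and] at hij hmax
  obtain ⟨v, hv⟩ : ∃ v, X.path i j v ≠ 0 := by simpa [LinearMap.ext_iff] using hij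
  refine ⟨i, j, v, le_of_not_gt fun hji => hij (path_of_lt hji), hv, fun p q hpq => ?_⟩
  by_contra h
  exact absurd (hmax (p, q) h) (not_le.mpr hpq)

theorem exists_interval_retract (hX : ¬X.IsZero) :
    ∃ i j : ℕ, i ≤ j ∧ j < n ∧ ∃ (ι : QRep.Hom (Eij K n i j) X) (π : QRep.Hom X (Eij K n i j)),
      ∀ p x, π.φ p (ι.φ p x) = x := by
  obtain ⟨i, j, v, hij, hv, hlongest⟩ := exists_longest_path hX
  obtain ⟨lam, hlam⟩ := Module.Projective.exists_dual_eq_one K hv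
  have hw (p : Fin n) (hp : ¬(i.val ≤ p.val ∧ p.val ≤ j.val)) : X.path i p v = 0 := by
    rcases lt_or_ge p i with h | h
    · rw [path_of_lt h, LinearMap.zero_apply]
    · rw [hlongest i p (by omega), LinearMap.zero_apply]
  have hμ (p : Fin n) (hp : ¬(i.val ≤ p.val ∧ p.val ≤ j.val)) : lam ∘ₗ X.path p j = 0 := by
    rcases lt_or_ge j p with h | h
    · rw [path_of_lt h, LinearMap.comp_zero]
    · rw [hlongest p j (by omega), LinearMap.comp_zero]
  have hwstep (e : Fin (n - 1)) (hs : i.val ≤ (ASrc n e).val) (_ : (ASrc n e).val ≤ j.val) :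
      X.f e (X.path i (ASrc n e) v) = X.path i (ATgt n e) v := by
    rw [← path_arrow, ← LinearMap.comp_apply, path_comp_path hs (Nat.le_succ _)]
  have hμstep (e : Fin (n - 1)) (_ : i.val ≤ (ATgt n e).val) (ht : (ATgt n e).val ≤ j.val) :
      (lam ∘ₗ X.path (ATgt n e) j) ∘ₗ X.f e = lam ∘ₗ X.path (ASrc n e) j := by
    rw [← path_arrow, LinearMap.comp_assoc, path_comp_path (Nat.le_succ _) ht]
  have hμw (p : Fin n) (hip : i.val ≤ p.val) (hpj : p.val ≤ j.val) :
      (lam ∘ₗ X.path p j) (X.path i p v) = 1 := by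
    rw [LinearMap.comp_apply, ← LinearMap.comp_apply (X.path p j), path_comp_path hip hpj, hlam]
  exact ⟨i, j, hij, j.isLt, Eij.homOfVectors X _ hw hwstep, Eij.homOfFunctionals X _ hμ hμstep,
    Eij.homOfFunctionals_homOfVectors X _ hw hwstep _ hμ hμstep hμw⟩

end ARep

/-- every indecomposable representation of `Aₙ` is isomorphic to some interval
representation `E^{ij}` with `i ≤ j < n` (0-based). -/
theorem stmt4 (K : Type) [Field K] (n : ℕ) (X : ARep K n) (hX : QRep.Indec X) :
    ∃ i j : ℕ, i ≤ j ∧ j < n ∧ QRep.Iso X (Eij K n i j) := by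
  obtain ⟨i, j, hij, hjn, ι, π, hπι⟩ := ARep.exists_interval_retract hX.1
  exact ⟨i, j, hij, hjn, hX.iso_of_retraction (Eij_not_isZero hij hjn) ι π hπι⟩
end

section
/- The map sending a well-formed bracketing (balanced parenthesis string) of length 2n+2 to the vector (a_1,…,a_n), where a_i is the number of open-parentheses strictly between the i-th open-parenthesis and its matching close-parenthesis (omitting the last open-parenthesis, whose count is necessarily zero), is a bijection from well-formed bracketings of length 2n+2 to bracket vectors of length n. -/
/-- A bracket vector of length `n` (0-based): `a i ≤ n - i` and whenever `1 ≤ j ≤ a i`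
(and `i+j` is in range), `j + a (i+j) ≤ a i`. -/
def IsBracketVec (n : ℕ) (a : Fin n → ℕ) : Prop :=
  (∀ i, a i ≤ n - i.val) ∧
  ∀ (i : Fin n) (j : ℕ), 1 ≤ j → j ≤ a i → ∀ h : i.val + j < n, j + a ⟨i.val + j, h⟩ ≤ a i

/-- A balanced parenthesis string (`true` = open, `false` = close): equal counts, and every
prefix has at least as many opens as closes. -/
def BalancedParen (w : List Bool) : Prop :=
  w.count true = w.count false ∧ ∀ k, (w.take k).count false ≤ (w.take k).count true

/-- The list of positions of the open parentheses of `w`, in increasing order. -/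
def openPositions (w : List Bool) : List ℕ :=
  (List.range w.length).filter (fun q => w.getD q false)

/-- The position of the close parenthesis matching the open parenthesis at position `q`:
the least `q' > q` at which the depth returns to its value just before `q`. -/
def matchPos (w : List Bool) (q : ℕ) : ℕ :=
  ((List.range w.length).filter (fun q' => decide (q < q') &&
    decide (((w.take (q' + 1)).count true : ℤ) - (w.take (q' + 1)).count false =
      ((w.take q).count true : ℤ) - (w.take q).count false))).headD 0

/-- The number of open parentheses strictly between the `i`-th open parenthesis (0-based)
and its matching close parenthesis. -/
def betweenCount (w : List Bool) (i : ℕ) : ℕ :=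
  ((w.drop ((openPositions w).getD i 0 + 1)).take
    (matchPos w ((openPositions w).getD i 0) - ((openPositions w).getD i 0 + 1))).count true

/-- The vector associated to a bracketing: `a i` is the number of opens strictly between the
`i`-th open parenthesis and its match, for `i < n` (the last open parenthesis is omitted). -/
def bracketOf (n : ℕ) (w : List Bool) : Fin n → ℕ := fun i => betweenCount w i.val

/-!
Let `depth w k` be the number of opens minus the number of closes among the first `k` letters.
The match of the open parenthesis at `p` is the first return of the depth to `depth w p`. So the
`a i` opens enclosed by the `i`-th open are the opens `i + 1, …, i + a i`, its match sits at
`p + 2 a i + 1`, and matched pairs are nested or disjoint, which gives the inequalities of a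
bracket vector.

Injectivity: at the first position where two balanced words with the same vector differ, one of
them has a close, matched by an earlier open `p` common to both words. As the vector determines
the match `p + 2 a i + 1`, the other word has a close at that position as well.

Surjectivity: extended by `a n = 0`, a bracket vector is a laminar family of intervals
`[j, j + a j]`. Put the `i`-th open at `i + #{j < i | j + a j < i}` and closes everywhere else;
counting opens shows that the depth first returns at `i + #{…} + 2 a i + 1`.
-/

lemma lt_length_of_getElem?_eq_some {α : Type*} {l : List α} {q : ℕ} {b : α}
    (h : l[q]? = some b) : q < l.length :=
  (List.getElem?_eq_some_iff.1 h).1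

lemma exists_getElem?_eq_some {α : Type*} {l : List α} {q : ℕ} (hq : q < l.length) :
    ∃ b, l[q]? = some b :=
  ⟨l[q], List.getElem?_eq_getElem hq⟩

lemma take_succ_of_getElem? {α : Type*} {l : List α} {k : ℕ} {b : α} (h : l[k]? = some b) :
    l.take (k + 1) = l.take k ++ [b] := by
  simp [List.take_add_one, h]

lemma List.exists_take_eq_and_getElem?_ne {α : Type*} {l l' : List α} (h : l ≠ l') :
    ∃ q, l.take q = l'.take q ∧ l[q]? ≠ l'[q]? := by
  classical
  have hex : ∃ q : ℕ, l[q]? ≠ l'[q]? := by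
    by_contra! h'
    exact h (List.ext_getElem? h')
  refine ⟨Nat.find hex, List.ext_getElem? fun k => ?_, Nat.find_spec hex⟩
  rw [List.getElem?_take, List.getElem?_take]
  split_ifs with hk
  · exact not_not.1 (Nat.find_min hex hk)
  · rfl

lemma count_take_succ_of_getElem? {w : List Bool} {k : ℕ} (h : w[k]? = some true) :
    (w.take (k + 1)).count true = (w.take k).count true + 1 := by
  simp [take_succ_of_getElem? h]

def depth (w : List Bool) (k : ℕ) : ℤ :=
  ((w.take k).count true : ℤ) - (w.take k).count false

lemma depth_eq (w : List Bool) (k : ℕ) :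
    depth w k = 2 * ((w.take k).count true : ℤ) - min k w.length := by
  have := List.count_true_add_count_false (w.take k)
  rw [List.length_take] at this
  rw [depth]
  omega

lemma depth_succ_of_getElem? {w : List Bool} {k : ℕ} {b : Bool} (h : w[k]? = some b) :
    depth w (k + 1) = depth w k + if b then 1 else -1 := by
  rw [depth, depth, take_succ_of_getElem? h]
  cases b <;> simp <;> ring

lemma depth_succ_of_length_le {w : List Bool} {k : ℕ} (hk : w.length ≤ k) :
    depth w (k + 1) = depth w k := by
  rw [depth, depth, List.take_of_length_le hk, List.take_of_length_le (Nat.le_succ_of_le hk)]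

lemma depth_succ_le (w : List Bool) (k : ℕ) : depth w (k + 1) ≤ depth w k + 1 := by
  rcases h : w[k]? with _ | b
  · rw [depth_succ_of_length_le (List.getElem?_eq_none_iff.1 h)]; omega
  · rw [depth_succ_of_getElem? h]; split <;> omega

lemma depth_le_succ_add_one (w : List Bool) (k : ℕ) : depth w k ≤ depth w (k + 1) + 1 := by
  rcases h : w[k]? with _ | b
  · rw [depth_succ_of_length_le (List.getElem?_eq_none_iff.1 h)]; omega
  · rw [depth_succ_of_getElem? h]; split <;> omega

lemma BalancedParen.depth_nonneg {w : List Bool} (hw : BalancedParen w) (k : ℕ) :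
    0 ≤ depth w k := by
  have := hw.2 k
  rw [depth]
  omega

lemma BalancedParen.depth_of_length_le {w : List Bool} (hw : BalancedParen w) {k : ℕ}
    (hk : w.length ≤ k) : depth w k = 0 := by
  rw [depth, List.take_of_length_le hk, hw.1]
  omega

lemma BalancedParen.count_true_eq {w : List Bool} (hw : BalancedParen w) {n : ℕ}
    (hlen : w.length = 2 * n + 2) : w.count true = n + 1 := by
  have := List.count_true_add_count_false w
  have := hw.1
  omega

lemma mem_openPositions {w : List Bool} {q : ℕ} : q ∈ openPositions w ↔ w[q]? = some true := by
  simp only [openPositions, List.mem_filter, List.mem_range, List.getD_eq_getElem?_getD]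
  constructor
  · rintro ⟨hq, h⟩
    simpa [List.getElem?_eq_getElem hq] using h
  · intro h
    obtain ⟨hq, h⟩ := List.getElem?_eq_some_iff.1 h
    simp [h, hq]

lemma length_openPositions (w : List Bool) : (openPositions w).length = w.count true := by
  induction w with
  | nil => rfl
  | cons b w ih =>
    rw [openPositions, List.length_cons, List.range_succ_eq_map, List.filter_cons,
      List.filter_map] at *
    cases b <;> simp [Function.comp_def, ← ih, List.getD_eq_getElem?_getD]

lemma openPositions_eq_take_append {w : List Bool} {x : ℕ} (hx : x ≤ w.length) :
    ∃ l, openPositions w = openPositions (w.take x) ++ l ∧ ∀ q ∈ l, x ≤ q := by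
  obtain ⟨r, hr⟩ := Nat.exists_eq_add_of_le hx
  refine ⟨((List.range r).map (x + ·)).filter (fun q => w.getD q false), ?_, ?_⟩
  · rw [openPositions, hr, List.range_add, List.filter_append, openPositions,
      List.length_take_of_le hx]
    congr 1
    refine List.filter_congr fun q hq => ?_
    simp [List.getD_eq_getElem?_getD, List.mem_range.1 hq]
  · intro q hq
    obtain ⟨s, -, rfl⟩ := List.mem_map.1 (List.mem_filter.1 hq).1
    omega

def nthOpen (w : List Bool) (i : ℕ) : ℕ := (openPositions w).getD i 0

lemma getElem?_nthOpen {w : List Bool} {i : ℕ} (hi : i < w.count true) :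
    w[nthOpen w i]? = some true := by
  rw [← length_openPositions] at hi
  rw [← mem_openPositions, nthOpen, List.getD_eq_getElem?_getD, List.getElem?_eq_getElem hi]
  exact List.getElem_mem hi

lemma nthOpen_lt_iff {w : List Bool} {i : ℕ} (hi : i < w.count true) (x : ℕ) :
    nthOpen w i < x ↔ i < (w.take x).count true := by
  rcases le_or_gt x w.length with hx | hx
  · obtain ⟨l, hl, hlx⟩ := openPositions_eq_take_append hx
    have hlen := congrArg List.length hl
    rw [List.length_append, length_openPositions, length_openPositions] at hlen
    rw [nthOpen, hl, List.getD_eq_getElem?_getD, ← length_openPositions (w.take x)]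
    by_cases hix : i < (openPositions (w.take x)).length
    · rw [List.getElem?_append_left hix, List.getElem?_eq_getElem hix, Option.getD_some]
      have := lt_length_of_getElem?_eq_some (mem_openPositions.1 (List.getElem_mem hix))
      simp only [List.length_take] at this
      exact ⟨fun _ => hix, fun _ => by omega⟩
    · have hil : i - (openPositions (w.take x)).length < l.length := by
        rw [length_openPositions (w.take x)] at hix ⊢; omega
      rw [List.getElem?_append_right (by omega), List.getElem?_eq_getElem hil, Option.getD_some]
      have := hlx _ (List.getElem_mem hil)
      exact ⟨fun h => by omega, fun h => absurd h hix⟩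
  · have := lt_length_of_getElem?_eq_some (getElem?_nthOpen hi)
    rw [List.take_of_length_le hx.le]
    exact ⟨fun _ => hi, fun _ => by omega⟩

lemma count_take_nthOpen {w : List Bool} {i : ℕ} (hi : i < w.count true) :
    (w.take (nthOpen w i)).count true = i := by
  have h1 := (nthOpen_lt_iff hi (nthOpen w i)).not.1 (lt_irrefl _)
  have h2 := (nthOpen_lt_iff hi (nthOpen w i + 1)).1 (Nat.lt_succ_self _)
  rw [count_take_succ_of_getElem? (getElem?_nthOpen hi)] at h2
  omega

lemma count_take_lt_count_of_getElem? {w : List Bool} {p : ℕ} (hp : w[p]? = some true) :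
    (w.take p).count true < w.count true := by
  have := (List.take_sublist (p + 1) w).count_le true
  rw [count_take_succ_of_getElem? hp] at this
  omega

lemma nthOpen_count_take {w : List Bool} {p : ℕ} (hp : w[p]? = some true) :
    nthOpen w ((w.take p).count true) = p := by
  have hc := count_take_lt_count_of_getElem? hp
  have h1 := (nthOpen_lt_iff hc p).not.2 (lt_irrefl _)
  have h2 := (nthOpen_lt_iff hc (p + 1)).2 (by rw [count_take_succ_of_getElem? hp]; omega)
  omega

lemma nthOpen_lt_nthOpen {w : List Bool} {i j : ℕ} (hj : j < w.count true) (hij : i < j) :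
    nthOpen w i < nthOpen w j := by
  rw [nthOpen_lt_iff (hij.trans hj), count_take_nthOpen hj]
  exact hij

lemma matchPos_eq_of {w : List Bool} {q m : ℕ} (hqm : q < m) (hm : m < w.length)
    (hret : depth w (m + 1) = depth w q)
    (hfirst : ∀ k, q < k → k < m → depth w (k + 1) ≠ depth w q) : matchPos w q = m := by
  rw [matchPos, List.headD_eq_head?_getD, List.head?_filter,
    List.find?_range_eq_some.2 ⟨?_, List.mem_range.2 hm, fun k hk => ?_⟩, Option.getD_some]
  · simpa [depth] using ⟨hqm, hret⟩
  · by_cases hqk : q < k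
    · simpa [depth, Nat.not_le.2 hqk] using hfirst k hqk hk
    · simp [hqk]

lemma BalancedParen.exists_first_return {w : List Bool} (hw : BalancedParen w) {q : ℕ}
    (hq : w[q]? = some true) :
    ∃ m, q < m ∧ m < w.length ∧ depth w (m + 1) = depth w q ∧
      ∀ k, q < k → k ≤ m → depth w q < depth w k := by
  classical
  have hex : ∃ k, q < k ∧ depth w (k + 1) ≤ depth w q :=
    ⟨w.length, lt_length_of_getElem?_eq_some hq, by
      rw [hw.depth_of_length_le (Nat.le_succ _)]; exact hw.depth_nonneg q⟩
  obtain ⟨hqm, hle⟩ := Nat.find_spec hex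
  have hup : depth w (q + 1) = depth w q + 1 := by simp [depth_succ_of_getElem? hq]
  have habove : ∀ k, q < k → k ≤ Nat.find hex → depth w q < depth w k := by
    rintro (_ | k) hqk hkm
    · omega
    · rcases (Nat.lt_succ_iff.1 hqk).eq_or_lt with rfl | hqk'
      · omega
      · have := Nat.find_min hex (show k < Nat.find hex by omega)
        exact not_le.1 fun h => this ⟨hqk', h⟩
  refine ⟨Nat.find hex, hqm, ?_, ?_, habove⟩
  · by_contra! hlen
    have := habove _ hqm le_rfl
    rw [hw.depth_of_length_le hlen] at this
    linarith [hw.depth_nonneg q]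
  · linarith [depth_le_succ_add_one w (Nat.find hex), habove _ hqm le_rfl]

lemma BalancedParen.matchPos_spec {w : List Bool} (hw : BalancedParen w) {p : ℕ}
    (hp : w[p]? = some true) :
    p < matchPos w p ∧ matchPos w p < w.length ∧ depth w (matchPos w p + 1) = depth w p ∧
      ∀ k, p < k → k ≤ matchPos w p → depth w p < depth w k := by
  obtain ⟨m, hpm, hm, hret, habove⟩ := hw.exists_first_return hp
  rw [matchPos_eq_of hpm hm hret fun k hpk hkm => (habove (k + 1) (by omega) hkm).ne']
  exact ⟨hpm, hm, hret, habove⟩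

lemma BalancedParen.getElem?_matchPos {w : List Bool} (hw : BalancedParen w) {p : ℕ}
    (hp : w[p]? = some true) : w[matchPos w p]? = some false := by
  obtain ⟨hpm, hm, hret, habove⟩ := hw.matchPos_spec hp
  obtain ⟨b, hb⟩ := exists_getElem?_eq_some hm
  have hstep := depth_succ_of_getElem? hb
  have := habove _ hpm le_rfl
  cases b
  · exact hb
  · simp only [if_true] at hstep
    omega

lemma BalancedParen.exists_matchPos_eq {w : List Bool} (hw : BalancedParen w) {q : ℕ}
    (hq : w[q]? = some false) : ∃ p < q, w[p]? = some true ∧ matchPos w p = q := by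
  classical
  have hdown := depth_succ_of_getElem? hq
  simp only [Bool.false_eq_true, if_false] at hdown
  set c := depth w (q + 1)
  have h0 : depth w 0 ≤ c := by
    rw [show depth w 0 = 0 by simp [depth]]; exact hw.depth_nonneg _
  -- the open matched by `q` is the last position before `q` where the depth is at most `c`
  set p := Nat.findGreatest (fun k => depth w k ≤ c) q
  have hpc : depth w p ≤ c := Nat.findGreatest_spec (P := fun k => depth w k ≤ c) q.zero_le h0
  have hmax : ∀ k, p < k → k ≤ q → c < depth w k := fun k h1 h2 =>
    not_le.1 (Nat.findGreatest_is_greatest h1 h2)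
  have hpq : p < q := (Nat.findGreatest_le q).lt_of_ne fun h => by
    have : depth w q ≤ c := h ▸ hpc
    omega
  have hstep := hmax (p + 1) (by omega) hpq
  have hpopen : w[p]? = some true := by
    obtain ⟨b, hb⟩ := exists_getElem?_eq_some (hpq.trans (lt_length_of_getElem?_eq_some hq))
    have := depth_succ_of_getElem? hb
    cases b
    · simp only [Bool.false_eq_true, if_false] at this; omega
    · exact hb
  refine ⟨p, hpq, hpopen, matchPos_eq_of hpq (lt_length_of_getElem?_eq_some hq) ?_ ?_⟩
  · linarith [depth_succ_le w p]
  · intro k hpk hkq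
    have := hmax (k + 1) (by omega) (by omega)
    linarith [depth_succ_le w p]

def innerOpens (w : List Bool) (p : ℕ) : ℕ :=
  ((w.drop (p + 1)).take (matchPos w p - (p + 1))).count true

lemma BalancedParen.count_take_matchPos {w : List Bool} (hw : BalancedParen w) {p : ℕ}
    (hp : w[p]? = some true) :
    (w.take (matchPos w p)).count true = (w.take p).count true + 1 + innerOpens w p := by
  obtain ⟨hpm, -⟩ := hw.matchPos_spec hp
  obtain ⟨d, hd⟩ := Nat.exists_eq_add_of_lt hpm
  rw [innerOpens, hd, show p + d + 1 = (p + 1) + d by omega, List.take_add, List.count_append,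
    count_take_succ_of_getElem? hp, Nat.add_sub_cancel_left]

lemma BalancedParen.matchPos_eq {w : List Bool} (hw : BalancedParen w) {p : ℕ}
    (hp : w[p]? = some true) : matchPos w p = p + 2 * innerOpens w p + 1 := by
  obtain ⟨hpm, hm, hret, -⟩ := hw.matchPos_spec hp
  have hdown := depth_succ_of_getElem? (hw.getElem?_matchPos hp)
  have hcount := hw.count_take_matchPos hp
  rw [hret, depth_eq w (matchPos w p), depth_eq w p, min_eq_left hm.le,
    min_eq_left (hpm.trans hm).le] at hdown
  simp only [Bool.false_eq_true, if_false] at hdown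
  omega

lemma BalancedParen.matchPos_lt_matchPos {w : List Bool} (hw : BalancedParen w) {p p' : ℕ}
    (hp : w[p]? = some true) (hp' : w[p']? = some true) (hpp' : p < p')
    (hp'm : p' < matchPos w p) : matchPos w p' < matchPos w p := by
  obtain ⟨-, -, hret, habove⟩ := hw.matchPos_spec hp
  obtain ⟨-, -, hret', habove'⟩ := hw.matchPos_spec hp'
  have hdeeper := habove p' hpp' hp'm.le
  by_contra! hle
  rcases hle.eq_or_lt with heq | hlt
  · rw [← heq] at hret'
    omega
  · have := habove' (matchPos w p + 1) (by omega) hlt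
    omega

lemma betweenCount_eq_innerOpens (w : List Bool) (i : ℕ) :
    betweenCount w i = innerOpens w (nthOpen w i) := rfl

lemma BalancedParen.count_take_matchPos_nthOpen {w : List Bool} (hw : BalancedParen w) {i : ℕ}
    (hi : i < w.count true) :
    (w.take (matchPos w (nthOpen w i))).count true = i + 1 + betweenCount w i := by
  rw [hw.count_take_matchPos (getElem?_nthOpen hi), count_take_nthOpen hi,
    betweenCount_eq_innerOpens]

lemma BalancedParen.add_betweenCount_lt {w : List Bool} (hw : BalancedParen w) {i : ℕ}
    (hi : i < w.count true) : i + betweenCount w i < w.count true := by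
  have := (List.take_sublist (matchPos w (nthOpen w i)) w).count_le true
  rw [hw.count_take_matchPos_nthOpen hi] at this
  omega

lemma BalancedParen.add_betweenCount_add_le {w : List Bool} (hw : BalancedParen w) {i j : ℕ}
    (hij : i + j < w.count true) (hj : 1 ≤ j) (hjb : j ≤ betweenCount w i) :
    j + betweenCount w (i + j) ≤ betweenCount w i := by
  have hi : i < w.count true := by omega
  have hlt : nthOpen w i < nthOpen w (i + j) := nthOpen_lt_nthOpen hij (by omega)
  have hinside : nthOpen w (i + j) < matchPos w (nthOpen w i) := by
    rw [nthOpen_lt_iff hij, hw.count_take_matchPos_nthOpen hi]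
    omega
  have hnest := hw.matchPos_lt_matchPos (getElem?_nthOpen hi) (getElem?_nthOpen hij) hlt hinside
  have := (List.take_sublist_take_left (l := w) hnest.le).count_le true
  rw [hw.count_take_matchPos_nthOpen hi, hw.count_take_matchPos_nthOpen hij] at this
  omega

lemma BalancedParen.isBracketVec_bracketOf {w : List Bool} (hw : BalancedParen w) {n : ℕ}
    (hc : w.count true = n + 1) : IsBracketVec n (bracketOf n w) := by
  refine ⟨fun i => ?_, fun i j hj hjb hij => ?_⟩
  · have := hw.add_betweenCount_lt (i := i) (by omega)
    simp only [bracketOf]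
    omega
  · exact hw.add_betweenCount_add_le (by omega) hj hjb

lemma BalancedParen.exists_betweenCount_ne {w w' : List Bool} (hw : BalancedParen w)
    (hw' : BalancedParen w') {q : ℕ} (htake : w.take q = w'.take q) (hq : w[q]? = some true)
    (hq' : w'[q]? = some false) :
    ∃ i < (w.take q).count true, betweenCount w i ≠ betweenCount w' i := by
  obtain ⟨p, hpq, hp', hmatch'⟩ := hw'.exists_matchPos_eq hq'
  have htake_p : w.take p = w'.take p := by
    rw [← min_eq_left hpq.le, ← List.take_take, htake, List.take_take]
  have hp : w[p]? = some true := by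
    rw [← List.getElem?_take_of_lt hpq, htake, List.getElem?_take_of_lt hpq, hp']
  refine ⟨(w.take p).count true, ?_, fun heq => ?_⟩
  · have := (List.take_sublist_take_left (l := w) (Nat.succ_le_of_lt hpq)).count_le true
    rw [count_take_succ_of_getElem? hp] at this
    omega
  · have hmatch : matchPos w p = q := by
      rw [betweenCount_eq_innerOpens, betweenCount_eq_innerOpens, nthOpen_count_take hp,
        htake_p, nthOpen_count_take hp'] at heq
      rw [hw.matchPos_eq hp, heq, ← hw'.matchPos_eq hp', hmatch']
    have := hw.getElem?_matchPos hp
    rw [hmatch, hq] at this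
    exact Bool.noConfusion (Option.some.inj this)

lemma BalancedParen.eq_of_betweenCount_eq {w w' : List Bool} (hw : BalancedParen w)
    (hw' : BalancedParen w') (hlen : w.length = w'.length)
    (h : ∀ i < w.count true, betweenCount w i = betweenCount w' i) : w = w' := by
  by_contra hne
  obtain ⟨q, htake, hq⟩ := List.exists_take_eq_and_getElem?_ne hne
  have hqlen : q < w.length := by
    by_contra! hge
    rw [List.getElem?_eq_none hge, List.getElem?_eq_none (hlen ▸ hge)] at hq
    exact hq rfl
  obtain ⟨b, hb⟩ := exists_getElem?_eq_some hqlen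
  obtain ⟨b', hb'⟩ := exists_getElem?_eq_some (hlen ▸ hqlen)
  have hc := (List.take_sublist q w).count_le true
  cases b <;> cases b'
  · exact hq (hb.trans hb'.symm)
  · obtain ⟨i, hi, hne⟩ := hw'.exists_betweenCount_ne hw htake.symm hb' hb
    rw [← htake] at hi
    exact hne (h i (by omega)).symm
  · obtain ⟨i, hi, hne⟩ := hw.exists_betweenCount_ne hw' htake hb hb'
    exact hne (h i (by omega))
  · exact hq (hb.trans hb'.symm)

-- A bracket vector extended by `A n = 0`: the intervals `[j, j + A j]`, `j ≤ n`, are pairwise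
-- nested or disjoint.
def IsLaminar (n : ℕ) (A : ℕ → ℕ) : Prop :=
  ∀ j ≤ n, j + A j ≤ n ∧ ∀ k, j < k → k ≤ j + A j → k + A k ≤ j + A j

lemma IsBracketVec.exists_isLaminar {n : ℕ} {a : Fin n → ℕ} (ha : IsBracketVec n a) :
    ∃ A : ℕ → ℕ, IsLaminar n A ∧ ∀ i : Fin n, A i = a i := by
  refine ⟨fun j => if h : j < n then a ⟨j, h⟩ else 0, fun j hj => ?_, fun i => dif_pos i.isLt⟩
  rcases hj.lt_or_eq with hj | rfl
  · simp only [dif_pos hj]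
    refine ⟨by have : a ⟨j, hj⟩ ≤ n - j := ha.1 ⟨j, hj⟩; omega, fun k hjk hk => ?_⟩
    split_ifs with hkn
    · have := ha.2 ⟨j, hj⟩ (k - j) (by omega) (by omega) (by simpa [show j + (k - j) = k by omega])
      simp only [show j + (k - j) = k by omega] at this
      omega
    · omega
  · simp only [lt_irrefl, dif_neg, not_false_eq_true, add_zero, le_refl, true_and]
    omega

namespace Laminar

def closedBefore (A : ℕ → ℕ) (i : ℕ) : ℕ := ((Finset.range i).filter (fun j => j + A j < i)).card

-- The `i`-th open comes after `i` opens and after the closes of the intervals ending before `i`.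
def openPos (A : ℕ → ℕ) (i : ℕ) : ℕ := i + closedBefore A i

def closePos (A : ℕ → ℕ) (i : ℕ) : ℕ := openPos A i + 2 * A i + 1

def word (n : ℕ) (A : ℕ → ℕ) : List Bool :=
  (List.range (2 * n + 2)).map fun q => decide (q ∈ (Finset.range (n + 1)).image (openPos A))

variable {n : ℕ} {A : ℕ → ℕ}

lemma closedBefore_le (A : ℕ → ℕ) (i : ℕ) : closedBefore A i ≤ i :=
  (Finset.card_filter_le _ _).trans (Finset.card_range i).le

lemma closedBefore_mono (A : ℕ → ℕ) : Monotone (closedBefore A) := fun i i' h =>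
  Finset.card_le_card fun j => by simp only [Finset.mem_filter, Finset.mem_range]; omega

lemma openPos_strictMono (A : ℕ → ℕ) : StrictMono (openPos A) := fun i i' h => by
  have := closedBefore_mono A h.le
  simp only [openPos]
  omega

lemma openPos_le (A : ℕ → ℕ) (i : ℕ) : openPos A i ≤ 2 * i := by
  have := closedBefore_le A i
  simp only [openPos]
  omega

lemma length_word : (word n A).length = 2 * n + 2 := by
  simp [word]

lemma openPositions_word : openPositions (word n A) = (List.range (n + 1)).map (openPos A) := by
  refine List.Pairwise.eq_of_mem_iff (r := (· < ·)) ?_ ?_ fun q => ?_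
  · exact List.pairwise_lt_range.filter _
  · exact List.pairwise_map.2 (List.pairwise_lt_range.imp fun h => openPos_strictMono A h)
  · rw [mem_openPositions, List.mem_map]
    simp only [word, List.getElem?_map, Finset.mem_image, Finset.mem_range]
    by_cases hq : q < 2 * n + 2
    · simp [List.getElem?_range hq]
    · simp only [List.getElem?_eq_none (l := List.range (2 * n + 2)) (by simpa using hq),
        Option.map_none, reduceCtorEq, false_iff, not_exists, not_and]
      intro i hi hiq
      have := openPos_le A i
      have := List.mem_range.1 hi
      omega

lemma count_true_word : (word n A).count true = n + 1 := by
  rw [← length_openPositions, openPositions_word, List.length_map, List.length_range]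

lemma nthOpen_word {i : ℕ} (hi : i ≤ n) : nthOpen (word n A) i = openPos A i := by
  rw [nthOpen, openPositions_word, List.getD_eq_getElem?_getD, List.getElem?_map,
    List.getElem?_range (by omega), Option.map_some, Option.getD_some]

lemma openPos_lt_iff {i : ℕ} (hi : i ≤ n) (x : ℕ) :
    openPos A i < x ↔ i < ((word n A).take x).count true := by
  rw [← nthOpen_word hi]
  exact nthOpen_lt_iff (by rw [count_true_word]; omega) x

lemma count_take_openPos {i : ℕ} (hi : i ≤ n) :
    ((word n A).take (openPos A i)).count true = i := by
  rw [← nthOpen_word hi]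
  exact count_take_nthOpen (by rw [count_true_word]; omega)

lemma count_take_word_le (x : ℕ) : ((word n A).take x).count true ≤ n + 1 :=
  count_true_word (n := n) (A := A) ▸ (List.take_sublist x (word n A)).count_le true

lemma balancedParen_word : BalancedParen (word n A) := by
  have htotal := List.count_true_add_count_false (word n A)
  rw [count_true_word, length_word] at htotal
  refine ⟨by rw [count_true_word]; omega, fun k => ?_⟩
  have hk := List.count_true_add_count_false ((word n A).take k)
  rw [List.length_take, length_word] at hk
  have := count_take_word_le (n := n) (A := A) k
  set c := ((word n A).take k).count true
  rcases Nat.lt_or_ge c (n + 1) with hc | hc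
  · have := (openPos_lt_iff (A := A) (Nat.lt_succ_iff.1 hc) k).not.2 (lt_irrefl c)
    have := openPos_le A c
    omega
  · omega

end Laminar

namespace IsLaminar

open Laminar

variable {n : ℕ} {A : ℕ → ℕ}

lemma closedBefore_add_le (hA : IsLaminar n A) {i j : ℕ} (hj : j ≤ n) (hji : j + A j < i) :
    closedBefore A j + A j + 1 ≤ closedBefore A i := by
  have hsub : (Finset.range j).filter (fun k => k + A k < j) ∪ Finset.Icc j (j + A j) ⊆
      (Finset.range i).filter (fun k => k + A k < i) := by
    intro k hk
    simp only [Finset.mem_union, Finset.mem_filter, Finset.mem_range, Finset.mem_Icc] at hk ⊢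
    rcases hk with ⟨hkj, hk⟩ | ⟨hjk, hkE⟩
    · omega
    · rcases hjk.eq_or_lt with rfl | hjk
      · omega
      · have := (hA j hj).2 k hjk hkE
        omega
  have hdisj : Disjoint ((Finset.range j).filter (fun k => k + A k < j))
      (Finset.Icc j (j + A j)) := by
    simp only [Finset.disjoint_left, Finset.mem_filter, Finset.mem_range, Finset.mem_Icc]
    omega
  have := Finset.card_le_card hsub
  rw [Finset.card_union_of_disjoint hdisj, Nat.card_Icc] at this
  simp only [closedBefore]
  omega

lemma closedBefore_add_le_add (hA : IsLaminar n A) {i j : ℕ} (hj : j ≤ n) (hji : j < i)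
    (hiE : i ≤ j + A j) : closedBefore A i + j + 1 ≤ closedBefore A j + i := by
  have hsub : (Finset.range i).filter (fun k => k + A k < i) ⊆
      (Finset.range j).filter (fun k => k + A k < j) ∪ Finset.Ioo j i := by
    intro k hk
    simp only [Finset.mem_union, Finset.mem_filter, Finset.mem_range, Finset.mem_Ioo] at hk ⊢
    rcases lt_trichotomy k j with hkj | rfl | hjk
    · refine Or.inl ⟨hkj, not_le.1 fun hjE => ?_⟩
      have := (hA k (by omega)).2 j hkj hjE
      omega
    · omega
    · omega
  have := (Finset.card_le_card hsub).trans (Finset.card_union_le _ _)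
  rw [Nat.card_Ioo] at this
  simp only [closedBefore]
  omega

lemma closePos_lt_openPos (hA : IsLaminar n A) {i j : ℕ} (hj : j ≤ n) (hji : j + A j < i) :
    closePos A j < openPos A i := by
  have := hA.closedBefore_add_le hj hji
  simp only [closePos, openPos]
  omega

lemma openPos_lt_closePos (hA : IsLaminar n A) {i j : ℕ} (hj : j ≤ n) (hij : i ≤ j + A j) :
    openPos A i < closePos A j := by
  rcases le_or_gt i j with hij' | hji
  · have := (openPos_strictMono A).monotone hij'
    simp only [closePos]
    omega
  · have := hA.closedBefore_add_le_add hj hji hij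
    simp only [closePos, openPos]
    omega

lemma closePos_lt (hA : IsLaminar n A) {i : ℕ} (hi : i ≤ n) : closePos A i < 2 * n + 2 := by
  have := (hA i hi).1
  have := closedBefore_le A i
  simp only [closePos, openPos]
  omega

lemma count_take_word (hA : IsLaminar n A) {i x : ℕ} (hi : i ≤ n)
    (hx : openPos A (i + A i) < x) (hx' : x ≤ closePos A i + 1) :
    ((word n A).take x).count true = i + A i + 1 := by
  have hE := (hA i hi).1
  have hlow := (openPos_lt_iff hE x).1 hx
  rcases hE.lt_or_eq with hE | hE
  · have := (openPos_lt_iff (A := A) (Nat.succ_le_of_lt hE) x).not.1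
      (not_lt.2 (hx'.trans (hA.closePos_lt_openPos hi (Nat.lt_succ_self _))))
    omega
  · have := count_take_word_le (n := n) (A := A) x
    omega

lemma depth_openPos_lt (hA : IsLaminar n A) {i k : ℕ} (hi : i ≤ n)
    (hk : openPos A i < k) (hk' : k ≤ closePos A i) :
    depth (word n A) (openPos A i) < depth (word n A) k := by
  have hlen := hA.closePos_lt hi
  rw [depth_eq, depth_eq, count_take_openPos hi, length_word, min_eq_left (by omega),
    min_eq_left (by omega)]
  set c := ((word n A).take k).count true
  have hic := (openPos_lt_iff hi k).1 hk
  have hcn := count_take_word_le (n := n) (A := A) k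
  suffices k + i < 2 * c + closedBefore A i by simp only [openPos]; push_cast; omega
  -- `k` is at most the position of the `c`-th open; if that open still lies inside the
  -- interval of `i`, `closedBefore_add_le_add` bounds that position
  rcases Nat.lt_or_ge c (i + A i + 1) with hcE | hcE
  · have hkc := (openPos_lt_iff (A := A) (i := c) (by have := (hA i hi).1; omega) k).not.2
      (lt_irrefl c)
    have := hA.closedBefore_add_le_add (i := c) hi (by omega) (by omega)
    simp only [openPos] at hkc
    omega
  · simp only [closePos, openPos] at hk'
    omega

lemma matchPos_word (hA : IsLaminar n A) {i : ℕ} (hi : i ≤ n) :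
    matchPos (word n A) (openPos A i) = closePos A i := by
  have hlen := hA.closePos_lt hi
  have hPM : openPos A i < closePos A i := by simp only [closePos]; omega
  refine matchPos_eq_of hPM (by rw [length_word]; exact hlen) ?_
    fun k hk hkM => (hA.depth_openPos_lt hi (by omega) hkM).ne'
  rw [depth_eq, depth_eq, count_take_openPos hi, hA.count_take_word hi
    (hA.openPos_lt_closePos hi le_rfl |>.trans (Nat.lt_succ_self _)) le_rfl, length_word,
    min_eq_left (by omega), min_eq_left (by omega)]
  simp only [closePos]
  push_cast
  ring

lemma betweenCount_word (hA : IsLaminar n A) {i : ℕ} (hi : i ≤ n) :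
    betweenCount (word n A) i = A i := by
  have hopen : (word n A)[openPos A i]? = some true := by
    rw [← nthOpen_word hi]; exact getElem?_nthOpen (by rw [count_true_word]; omega)
  have := balancedParen_word.count_take_matchPos hopen
  rw [hA.matchPos_word hi, hA.count_take_word hi (hA.openPos_lt_closePos hi le_rfl)
    (Nat.le_succ _), count_take_openPos hi] at this
  rw [betweenCount_eq_innerOpens, nthOpen_word hi]
  omega

end IsLaminar

lemma bracketOf_mapsTo (n : ℕ) :
    Set.MapsTo (bracketOf n) {w : List Bool | w.length = 2 * n + 2 ∧ BalancedParen w}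
      {a : Fin n → ℕ | IsBracketVec n a} :=
  fun _ ⟨hlen, hw⟩ => hw.isBracketVec_bracketOf (hw.count_true_eq hlen)

lemma bracketOf_injOn (n : ℕ) :
    Set.InjOn (bracketOf n) {w : List Bool | w.length = 2 * n + 2 ∧ BalancedParen w} := by
  rintro w ⟨hlen, hw⟩ w' ⟨hlen', hw'⟩ heq
  have hc := hw.count_true_eq hlen
  have hc' := hw'.count_true_eq hlen'
  refine hw.eq_of_betweenCount_eq hw' (hlen.trans hlen'.symm) fun i hi => ?_
  rcases (Nat.lt_succ_iff.1 (hc ▸ hi)).lt_or_eq with hin | rfl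
  · exact congrFun heq ⟨i, hin⟩
  · have := hw.add_betweenCount_lt hi
    have := hw'.add_betweenCount_lt (hc' ▸ hc ▸ hi)
    omega

lemma bracketOf_surjOn (n : ℕ) :
    Set.SurjOn (bracketOf n) {w : List Bool | w.length = 2 * n + 2 ∧ BalancedParen w}
      {a : Fin n → ℕ | IsBracketVec n a} := by
  intro a ha
  obtain ⟨A, hA, hAa⟩ := IsBracketVec.exists_isLaminar ha
  exact ⟨Laminar.word n A, ⟨Laminar.length_word, Laminar.balancedParen_word⟩,
    funext fun i => (hA.betweenCount_word i.isLt.le).trans (hAa i)⟩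

/-- the map sending a well-formed bracketing of length `2n+2` to the vector of
counts of open parentheses strictly between each open parenthesis (except the last) and its
matching close parenthesis is a bijection onto the set of bracket vectors of length `n`. -/
theorem stmt13 (n : ℕ) :
    Set.BijOn (bracketOf n) {w : List Bool | w.length = 2 * n + 2 ∧ BalancedParen w}
      {a : Fin n → ℕ | IsBracketVec n a} :=
  ⟨bracketOf_mapsTo n, bracketOf_injOn n, bracketOf_surjOn n⟩
end

section
/- The number of bracket vectors of length n equals the Catalan number C_{n+1} = (1/(n+2))·binom(2n+2, n+1). -/
theorem List.getD_append_length_add {α : Type*} (A B : List α) (d : α) (j : ℕ) :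
    (A ++ B).getD (A.length + j) d = B.getD j d := by
  rw [List.getD_append_right _ _ _ _ (by omega), Nat.add_sub_cancel_left]

/-- Entry `q i` is an arc from `i` to `i + q i`: every arc ends inside the list, and an arc
starting under another one also ends under it. Past the end `getD` reads `0`. -/
def IsNestedArcs (q : List ℕ) : Prop :=
  (∀ i < q.length, i + q.getD i 0 < q.length) ∧
  ∀ i k, i < k → k ≤ i + q.getD i 0 → k + q.getD k 0 ≤ i + q.getD i 0

namespace IsNestedArcs

open List

theorem nil : IsNestedArcs [] :=
  ⟨by simp, fun i k hik hk => by simp at hk; omega⟩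

theorem cons_iff {c : ℕ} {q : List ℕ} :
    IsNestedArcs (c :: q) ↔ c ≤ q.length ∧ (∀ j < c, j + q.getD j 0 < c) ∧ IsNestedArcs q := by
  constructor
  · rintro ⟨hlen, hnest⟩
    refine ⟨?_, fun j hj => ?_, fun i hi => ?_, fun i k hik hk => ?_⟩
    · simpa using hlen 0
    · have := hnest 0 (j + 1); simp only [getD_cons_zero, getD_cons_succ] at this; omega
    · have := hlen (i + 1); simp only [length_cons, getD_cons_succ] at this; omega
    · have := hnest (i + 1) (k + 1); simp only [getD_cons_succ] at this; omega
  · rintro ⟨hc, harc, hlen, hnest⟩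
    refine ⟨fun i hi => ?_, fun i k hik hk => ?_⟩
    · cases i with
      | zero => simpa using hc
      | succ i => have := hlen i; simp only [length_cons, getD_cons_succ] at hi ⊢; omega
    · obtain ⟨k, rfl⟩ : ∃ k', k = k' + 1 := ⟨k - 1, by omega⟩
      cases i with
      | zero => have := harc k; simp only [getD_cons_zero, getD_cons_succ] at hk ⊢; omega
      | succ i => have := hnest i k; simp only [getD_cons_succ] at hk ⊢; omega

theorem append {A B : List ℕ} (hA : IsNestedArcs A) (hB : IsNestedArcs B) :
    IsNestedArcs (A ++ B) := by
  obtain ⟨hAlen, hAnest⟩ := hA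
  obtain ⟨hBlen, hBnest⟩ := hB
  refine ⟨fun i hi => ?_, fun i k hik hk => ?_⟩
  · rw [length_append] at hi ⊢
    rcases lt_or_ge i A.length with hiA | hiA
    · have := hAlen i hiA; rw [getD_append _ _ _ _ hiA]; omega
    · obtain ⟨j, rfl⟩ := Nat.exists_eq_add_of_le hiA
      have := hBlen j (by omega); rw [getD_append_length_add]; omega
  · rcases lt_or_ge i A.length with hiA | hiA
    · have := hAlen i hiA
      rw [getD_append _ _ _ _ hiA] at hk ⊢
      rw [getD_append _ _ _ _ (by omega)]
      exact hAnest i k hik hk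
    · obtain ⟨i, rfl⟩ := Nat.exists_eq_add_of_le hiA
      obtain ⟨k, rfl⟩ := Nat.exists_eq_add_of_le (hiA.trans hik.le)
      rw [getD_append_length_add] at hk ⊢
      rw [getD_append_length_add]
      have := hBnest i k (by omega) (by omega)
      omega

theorem of_append_right {A B : List ℕ} (h : IsNestedArcs (A ++ B)) : IsNestedArcs B := by
  obtain ⟨hlen, hnest⟩ := h
  refine ⟨fun j hj => ?_, fun i k hik hk => ?_⟩
  · have := hlen (A.length + j); rw [length_append, getD_append_length_add] at this; omega
  · have := hnest (A.length + i) (A.length + k)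
    simp only [getD_append_length_add] at this
    omega

theorem of_append_left {A B : List ℕ} (h : IsNestedArcs (A ++ B))
    (hlen : ∀ j < A.length, j + A.getD j 0 < A.length) : IsNestedArcs A := by
  refine ⟨hlen, fun i k hik hk => ?_⟩
  rcases lt_or_ge i A.length with hiA | hiA
  · have := hlen i hiA
    have := h.2 i k hik
    rw [getD_append _ _ _ _ hiA, getD_append _ _ _ _ (by omega)] at this
    omega
  · rw [getD_eq_default _ _ hiA] at hk; omega

theorem getD_eq_zero_of_length_eq_succ {q : List ℕ} {m : ℕ} (h : IsNestedArcs q)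
    (hlen : q.length = m + 1) : q.getD m 0 = 0 := by
  have := h.1 m (by omega)
  omega

theorem length_cons_append_iff {A B : List ℕ} :
    IsNestedArcs (A.length :: (A ++ B)) ↔ IsNestedArcs A ∧ IsNestedArcs B := by
  have harc_iff : (∀ j < A.length, j + (A ++ B).getD j 0 < A.length) ↔
      ∀ j < A.length, j + A.getD j 0 < A.length :=
    forall₂_congr fun j hj => by rw [getD_append _ _ _ _ hj]
  rw [cons_iff, harc_iff]
  exact ⟨fun ⟨_, harc, h⟩ => ⟨h.of_append_left harc, h.of_append_right⟩,
    fun ⟨hA, hB⟩ => ⟨by simp, hA.1, hA.append hB⟩⟩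

end IsNestedArcs

open BinaryTree

def preorderCode : BinaryTree Unit → List ℕ
  | nil => []
  | node _ l r => l.numNodes :: (preorderCode l ++ preorderCode r)

def ofPreorderCode : List ℕ → BinaryTree Unit
  | [] => nil
  | c :: q => node () (ofPreorderCode (q.take c)) (ofPreorderCode (q.drop c))
termination_by q => q.length
decreasing_by all_goals simp only [List.length_cons, List.length_take, List.length_drop]; omega

theorem length_preorderCode (t : BinaryTree Unit) : (preorderCode t).length = t.numNodes := by
  induction t with
  | nil => rfl
  | node _ l r ihl ihr => simp [preorderCode, ihl, ihr]

theorem ofPreorderCode_preorderCode (t : BinaryTree Unit) :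
    ofPreorderCode (preorderCode t) = t := by
  induction t with
  | nil => simp [preorderCode, ofPreorderCode]
  | node _ l r ihl ihr =>
    rw [preorderCode, ofPreorderCode, ← length_preorderCode l, List.take_left, List.drop_left,
      ihl, ihr]

theorem isNestedArcs_preorderCode (t : BinaryTree Unit) : IsNestedArcs (preorderCode t) := by
  induction t with
  | nil => exact IsNestedArcs.nil
  | node _ l r ihl ihr =>
    rw [preorderCode, ← length_preorderCode l]
    exact IsNestedArcs.length_cons_append_iff.2 ⟨ihl, ihr⟩

theorem preorderCode_ofPreorderCode {q : List ℕ} (h : IsNestedArcs q) :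
    preorderCode (ofPreorderCode q) = q := by
  induction q using ofPreorderCode.induct with
  | case1 => simp [preorderCode, ofPreorderCode]
  | case2 c q ihl ihr =>
    have hc : c ≤ q.length := (IsNestedArcs.cons_iff.1 h).1
    have hsplit : c :: q = (q.take c).length :: (q.take c ++ q.drop c) := by simp [hc]
    rw [hsplit, IsNestedArcs.length_cons_append_iff] at h
    rw [ofPreorderCode, preorderCode, ihl h.1, ihr h.2, ← length_preorderCode, ihl h.1,
      List.length_take, min_eq_left hc, List.take_append_drop]

section BracketCode

variable {n : ℕ}

def bracketCode (a : Fin n → ℕ) : List ℕ := List.ofFn a ++ [0]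

theorem length_bracketCode (a : Fin n → ℕ) : (bracketCode a).length = n + 1 := by
  simp [bracketCode]

theorem getD_bracketCode (a : Fin n → ℕ) (i : Fin n) : (bracketCode a).getD i 0 = a i := by
  simp [bracketCode]

theorem getD_bracketCode_of_le (a : Fin n → ℕ) {i : ℕ} (h : n ≤ i) :
    (bracketCode a).getD i 0 = 0 := by
  simp [bracketCode, List.getElem?_append_right, h]

theorem bracketCode_getD {q : List ℕ} (hlen : q.length = n + 1) (hlast : q.getD n 0 = 0) :
    bracketCode (fun i : Fin n => q.getD i 0) = q := by
  refine List.ext_getElem (by rw [length_bracketCode, hlen]) fun i h₁ h₂ => ?_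
  rw [← List.getD_eq_getElem _ 0, ← List.getD_eq_getElem _ 0]
  rcases lt_or_ge i n with hi | hi
  · rw [getD_bracketCode _ ⟨i, hi⟩]
  · rw [getD_bracketCode_of_le _ hi, show i = n by omega, hlast]

theorem isNestedArcs_bracketCode_iff {a : Fin n → ℕ} :
    IsNestedArcs (bracketCode a) ↔ IsBracketVec n a := by
  constructor
  · rintro ⟨hlen, hnest⟩
    refine ⟨fun i => ?_, fun i j hj₁ hj₂ hij => ?_⟩
    · have := hlen i (by rw [length_bracketCode]; omega)
      rw [getD_bracketCode a i, length_bracketCode] at this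
      omega
    · have := hnest i (i + j) (by omega) (by rw [getD_bracketCode a i]; omega)
      rw [getD_bracketCode a i, getD_bracketCode a ⟨_, hij⟩] at this
      omega
  · rintro ⟨hbound, hnest⟩
    refine ⟨fun i hi => ?_, fun i k hik hk => ?_⟩
    · rw [length_bracketCode] at hi ⊢
      rcases lt_or_ge i n with hin | hin
      · have : a ⟨i, hin⟩ ≤ n - i := hbound ⟨i, hin⟩
        rw [getD_bracketCode a ⟨i, hin⟩]
        omega
      · rw [getD_bracketCode_of_le a hin]
        omega
    · rcases lt_or_ge i n with hin | hin
      swap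
      · rw [getD_bracketCode_of_le a hin] at hk
        omega
      rw [getD_bracketCode a ⟨i, hin⟩] at hk ⊢
      obtain ⟨j, rfl⟩ := Nat.exists_eq_add_of_lt hik
      rcases lt_or_ge (i + j + 1) n with hkn | hkn
      · have : j + 1 + a ⟨i + j + 1, hkn⟩ ≤ a ⟨i, hin⟩ :=
          hnest ⟨i, hin⟩ (j + 1) (by omega) (by omega) hkn
        rw [getD_bracketCode a ⟨_, hkn⟩]
        omega
      · rw [getD_bracketCode_of_le a hkn]
        omega

end BracketCode

def bracketVecEquivIsNestedArcs (n : ℕ) :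
    {a : Fin n → ℕ // IsBracketVec n a} ≃ {q : List ℕ // q.length = n + 1 ∧ IsNestedArcs q} where
  toFun a := ⟨bracketCode a.1, length_bracketCode a.1, isNestedArcs_bracketCode_iff.2 a.2⟩
  invFun q := ⟨fun i => q.1.getD i 0, isNestedArcs_bracketCode_iff.1 <| by
    rw [bracketCode_getD q.2.1 (q.2.2.getD_eq_zero_of_length_eq_succ q.2.1)]
    exact q.2.2⟩
  left_inv a := Subtype.ext <| funext fun i => getD_bracketCode a.1 i
  right_inv q := Subtype.ext <| bracketCode_getD q.2.1 (q.2.2.getD_eq_zero_of_length_eq_succ q.2.1)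

def isNestedArcsEquivBinaryTree (m : ℕ) :
    {q : List ℕ // q.length = m ∧ IsNestedArcs q} ≃ {t : BinaryTree Unit // t.numNodes = m} where
  toFun q := ⟨ofPreorderCode q.1, by
    rw [← length_preorderCode, preorderCode_ofPreorderCode q.2.2, q.2.1]⟩
  invFun t := ⟨preorderCode t.1, by rw [length_preorderCode, t.2], isNestedArcs_preorderCode t.1⟩
  left_inv q := Subtype.ext (preorderCode_ofPreorderCode q.2.2)
  right_inv t := Subtype.ext (ofPreorderCode_preorderCode t.1)

theorem card_binaryTree_numNodes_eq_catalan (m : ℕ) :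
    Nat.card {t : BinaryTree Unit // t.numNodes = m} = catalan m := by
  rw [← treesOfNumNodesEq_card_eq_catalan, ← Nat.card_eq_finsetCard]
  exact Nat.card_congr (Equiv.subtypeEquivRight fun _ => mem_treesOfNumNodesEq.symm)

/-- the number of bracket vectors of length `n` is the Catalan number
`C_{n+1} = binom(2n+2, n+1)/(n+2)`. -/
theorem stmt14 (n : ℕ) :
    Nat.card {a : Fin n → ℕ // IsBracketVec n a} = (2 * n + 2).choose (n + 1) / (n + 2) := by
  rw [Nat.card_congr ((bracketVecEquivIsNestedArcs n).trans (isNestedArcsEquivBinaryTree (n + 1))),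
    card_binaryTree_numNodes_eq_catalan, catalan_eq_centralBinom_div, Nat.centralBinom]
  congr 2
end
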